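/- Let d ≥ 1, let x, y ∈ ℝ^d with x ≠ y, and let S, T ∈ ℝ^{d×d} with T invertible. Set z = x − y, e = z/|z|, u = (T⁻¹z)/|T⁻¹z|, H = I − 2uuᵀ, Δ = S − T, and α = S − TH. Then tr(ααᵀ) − |αᵀe|² = tr(ΔΔᵀ) − |Δᵀe|². -/

import Mathlib

open scoped Matrix
open WithLp (ofLp)

noncomputable def matVec {d : ℕ} (S : Matrix (Fin d) (Fin d) ℝ)
    (x : EuclideanSpace ℝ (Fin d)) : EuclideanSpace ℝ (Fin d) :=
  Matrix.toEuclideanCLM (𝕜 := ℝ) S x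

/-!
Since `T u = (|z| / |T⁻¹z|) e`, the reflection changes `Δ = S − T` only by the rank-one term
`e vᵀ` with `v = (2|z| / |T⁻¹z|) u`, i.e. `α = Δ + e vᵀ`. For a unit vector `e`, the quantity
`tr(MMᵀ) − |Mᵀe|²` is the squared Frobenius norm of `(I − eeᵀ) M`, and the projection
`I − eeᵀ` annihilates every perturbation of the form `e vᵀ`.
-/

namespace Matrix

variable {m n R : Type*} [Fintype m] [Fintype n] [CommRing R]

theorem trace_mul_transpose_sub_dotProduct_add_vecMulVec (M : Matrix m n R) (e : m → R)
    (v : n → R) (he : e ⬝ᵥ e = 1) :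
    trace ((M + vecMulVec e v) * (M + vecMulVec e v)ᵀ)
        - (M + vecMulVec e v)ᵀ *ᵥ e ⬝ᵥ ((M + vecMulVec e v)ᵀ *ᵥ e)
      = trace (M * Mᵀ) - Mᵀ *ᵥ e ⬝ᵥ (Mᵀ *ᵥ e) := by
  have hvec : e ᵥ* (M + vecMulVec e v) = e ᵥ* M + v := by
    rw [vecMul_add, vecMul_vecMulVec, he, one_smul]
  have htrace : trace ((M + vecMulVec e v) * (M + vecMulVec e v)ᵀ)
      = trace (M * Mᵀ) + 2 * (e ᵥ* M ⬝ᵥ v) + v ⬝ᵥ v := by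
    rw [transpose_add, transpose_vecMulVec, Matrix.mul_add, trace_add,
      trace_mul_comm _ (vecMulVec v e), vecMulVec_mul, trace_vecMulVec, hvec, Matrix.add_mul,
      trace_add, vecMulVec_mul, trace_vecMulVec, vecMul_transpose, dotProduct_mulVec,
      dotProduct_add, dotProduct_comm v]
    ring
  rw [htrace, mulVec_transpose, mulVec_transpose, hvec]
  simp only [add_dotProduct, dotProduct_add, dotProduct_comm v (e ᵥ* M)]
  ring

theorem sub_mul_one_sub_two_smul_vecMulVec [DecidableEq n] (S T : Matrix n n R) (u : n → R) :
    S - T * (1 - (2 : R) • vecMulVec u u) = S - T + vecMulVec (T *ᵥ u) ((2 : R) • u) := by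
  rw [Matrix.mul_sub, Matrix.mul_one, Matrix.mul_smul, mul_vecMulVec, vecMulVec_smul]
  abel

end Matrix

namespace EuclideanSpace

theorem ofLp_dotProduct_self {n : Type*} [Fintype n] (x : EuclideanSpace ℝ n) :
    ofLp x ⬝ᵥ ofLp x = ‖x‖ ^ 2 := by
  rw [← real_inner_self_eq_norm_sq, inner_eq_star_dotProduct, star_trivial]

end EuclideanSpace

theorem norm_matVec_sq {d : ℕ} (M : Matrix (Fin d) (Fin d) ℝ) (x : EuclideanSpace ℝ (Fin d)) :
    ‖matVec M x‖ ^ 2 = M *ᵥ ofLp x ⬝ᵥ M *ᵥ ofLp x :=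
  (EuclideanSpace.ofLp_dotProduct_self _).symm

theorem reflection_coupling_trace_identity
    {d : ℕ} (x y : EuclideanSpace ℝ (Fin d)) (hxy : x ≠ y)
    (S T : Matrix (Fin d) (Fin d) ℝ) (hT : IsUnit T)
    (z e u : EuclideanSpace ℝ (Fin d)) (H Δ α : Matrix (Fin d) (Fin d) ℝ)
    (hz : z = x - y)
    (he : e = ‖z‖⁻¹ • z)
    (hu : u = ‖matVec T⁻¹ z‖⁻¹ • matVec T⁻¹ z)
    (hH : H = 1 - (2 : ℝ) • Matrix.vecMulVec (fun i => u i) (fun i => u i))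
    (hΔ : Δ = S - T)
    (hα : α = S - T * H) :
    Matrix.trace (α * αᵀ) - ‖matVec αᵀ e‖ ^ 2
      = Matrix.trace (Δ * Δᵀ) - ‖matVec Δᵀ e‖ ^ 2 := by
  have hzn : ‖z‖ ≠ 0 := norm_ne_zero_iff.mpr (hz ▸ sub_ne_zero_of_ne hxy)
  have he1 : ofLp e ⬝ᵥ ofLp e = 1 := by
    rw [EuclideanSpace.ofLp_dotProduct_self, he, norm_smul, norm_inv, norm_norm,
      inv_mul_cancel₀ hzn, one_pow]
  have hze : ofLp z = ‖z‖ • ofLp e := by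
    rw [he, WithLp.ofLp_smul, smul_smul, mul_inv_cancel₀ hzn, one_smul]
  have hTw : T *ᵥ ofLp (matVec T⁻¹ z) = ofLp z := by
    rw [matVec, Matrix.ofLp_toEuclideanCLM, Matrix.mulVec_mulVec,
      Matrix.mul_nonsing_inv _ (T.isUnit_iff_isUnit_det.mp hT), Matrix.one_mulVec]
  have hTu : T *ᵥ ofLp u = (‖matVec T⁻¹ z‖⁻¹ * ‖z‖) • ofLp e := by
    rw [hu, WithLp.ofLp_smul, Matrix.mulVec_smul, hTw, hze, smul_smul]
  have hαΔ : α = Δ + Matrix.vecMulVec (ofLp e)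
      ((‖matVec T⁻¹ z‖⁻¹ * ‖z‖) • (2 : ℝ) • ofLp u) := by
    rw [hα, hH, hΔ, Matrix.sub_mul_one_sub_two_smul_vecMulVec, hTu, Matrix.smul_vecMulVec,
      ← Matrix.vecMulVec_smul]
  rw [norm_matVec_sq, norm_matVec_sq, hαΔ]
  exact Matrix.trace_mul_transpose_sub_dotProduct_add_vecMulVec _ _ _ he1
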